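/- arXiv:1907.01057 — 2 statements merged into one kernel-verified Lean document; each statement's English description precedes it below -/
import Mathlib

section
/- Define h = q·t·∏_{k≥1}(1-q^{11k}) · Σ_{n≥0} p(11n+6)qⁿ, where t = q^{-5}∏_{n≥1}((1-qⁿ)/(1-q^{11n}))^{12} and p is the partition function. Then the first terms of the Laurent expansion of h are h = 11q^{-4} + 165q^{-3} + 748q^{-2} + 1639q^{-1} + 3553 + O(q). -/
/-!
Write `q⁴h = A · B⁻¹ · C · D` with `A = ∏ (1 - qⁿ)¹²`, `B = ∏ (1 - q¹¹ⁿ)¹²`, `C = ∏ (1 - q¹¹ⁿ)`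
and `D = ∑ p(11n + 6) qⁿ`. The coefficients of `q⁻⁴, …, q⁰` in `h` only see these series modulo
`q⁵`, where `B ≡ C ≡ 1` and
`A ≡ (1 - q)¹² (1 - q²)¹² (1 - q³)¹² (1 - q⁴)¹² ≡ 1 - 12q + 54q² - 88q³ - 99q⁴`. So they are fixed combinations of `p(6), p(17), p(28), p(39), p(50)`, which the
kernel evaluates through `p_{≤k+1}(n+1) = p_{≤k}(n+1) + p_{≤k+1}(n-k)` (for `k ≤ n`), where
`p_{≤k}(n)` counts the partitions of `n` into parts at most `k`: split off one part `k + 1`.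
-/

open PowerSeries

noncomputable section

/-- The formal infinite product `∏_{n≥1} F n` of power series, assuming each `F n` is
`1 + O(X^n)` so that the coefficient of `X^k` stabilizes: it is the coefficient of
`X^k` in the finite partial product `∏_{n=1}^{k} F n`. -/
def formalProd (F : ℕ → PowerSeries ℚ) : PowerSeries ℚ :=
  PowerSeries.mk fun k => PowerSeries.coeff k (∏ n ∈ Finset.Icc 1 k, F n)

/-- `t = q^{-5} ∏_{n≥1}((1-qⁿ)/(1-q^{11n}))^{12}` as a formal Laurent series over `ℚ`. -/
def tSeries : LaurentSeries ℚ :=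
  HahnSeries.single (-5 : ℤ) 1 *
    (HahnSeries.ofPowerSeries ℤ ℚ (formalProd fun n => (1 - X ^ n) ^ 12)) *
    (HahnSeries.ofPowerSeries ℤ ℚ (formalProd fun n => (1 - X ^ (11 * n)) ^ 12))⁻¹

/-- The partition function `p(n)`: the number of partitions of `n`. -/
def partitionFun (n : ℕ) : ℚ := Fintype.card (Nat.Partition n)

/-- `h = q·t·∏_{k≥1}(1-q^{11k}) · Σ_{n≥0} p(11n+6) qⁿ` as a formal Laurent series. -/
def hSeries : LaurentSeries ℚ :=
  HahnSeries.single (1 : ℤ) 1 * tSeries *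
    HahnSeries.ofPowerSeries ℤ ℚ (formalProd fun k => 1 - X ^ (11 * k)) *
    HahnSeries.ofPowerSeries ℤ ℚ (PowerSeries.mk fun n => partitionFun (11 * n + 6))

open Finset

namespace Nat.Partition

theorem card_restricted_zero (k : ℕ) : #(restricted 0 (· ≤ k)) = 1 := by
  simp [restricted]

theorem card_restricted_succ_le_zero (n : ℕ) : #(restricted (n + 1) (· ≤ 0)) = 0 := by
  refine Finset.card_eq_zero.2 (filter_eq_empty_iff.2 fun p _ hp => ?_)
  have : p.parts ≠ 0 := fun h => by simpa [h] using p.parts_sum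
  obtain ⟨i, hi⟩ := Multiset.exists_mem_of_ne_zero this
  exact (p.parts_pos hi).ne' (Nat.le_zero.1 (hp i hi))

theorem card_filter_mem_parts_restricted_le {m a : ℕ} (ha : 1 ≤ a) (ham : a ≤ m) :
    #{p ∈ restricted m (· ≤ a) | a ∈ p.parts} = #(restricted (m - a) (· ≤ a)) := by
  let e := partitionWithPartEquiv ha ham
  refine card_bij' (fun p hp => e ⟨p, (mem_filter.1 hp).2⟩) (fun q _ => (e.symm q).1)
    (fun p hp => ?_) (fun q hq => ?_) (fun p hp => by simp [e]) (fun q hq => by simp [e])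
  · simp only [restricted, mem_filter, mem_univ, true_and] at hp ⊢
    simpa [e] using fun i hi => hp.1 i (Multiset.mem_of_mem_erase hi)
  · simp_all [restricted, e]

theorem card_restricted_le_succ (n k : ℕ) :
    #(restricted (n + 1) (· ≤ k + 1)) =
      #(restricted (n + 1) (· ≤ k)) + if k ≤ n then #(restricted (n - k) (· ≤ k + 1)) else 0 := by
  rw [← card_filter_add_card_filter_not (fun p => k + 1 ∈ p.parts), add_comm]
  congr 1
  · simp only [restricted, filter_filter]
    refine congrArg _ (filter_congr fun p _ => ?_)
    grind
  · split_ifs with hkn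
    · rw [← Nat.add_sub_add_right n 1 k]
      exact card_filter_mem_parts_restricted_le (Nat.succ_pos k) (Nat.succ_le_succ hkn)
    · refine Finset.card_eq_zero.2 (filter_eq_empty_iff.2 fun p _ hp => hkn ?_)
      have := le_of_mem_parts hp
      omega

/-- The recursion of `card_restricted_le_succ`; the fuel argument makes it structural, so that
the kernel can evaluate it. -/
def boundedCount : ℕ → ℕ → ℕ → ℕ
  | 0, _, _ => 0
  | _ + 1, _, 0 => 1
  | _ + 1, 0, _ + 1 => 0
  | fuel + 1, k + 1, n + 1 =>
      boundedCount fuel k (n + 1) + if k ≤ n then boundedCount fuel (k + 1) (n - k) else 0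

theorem card_restricted_le_eq_boundedCount {fuel k n : ℕ} (h : k + n < fuel) :
    #(restricted n (· ≤ k)) = boundedCount fuel k n := by
  induction fuel generalizing k n with
  | zero => omega
  | succ fuel ih =>
    match k, n with
    | k, 0 => rw [card_restricted_zero]; rfl
    | 0, n + 1 => exact card_restricted_succ_le_zero n
    | k + 1, n + 1 =>
      rw [card_restricted_le_succ, boundedCount, ih (by omega)]
      split_ifs
      · rw [ih (by omega)]
      · rfl

theorem card_eq_boundedCount (n : ℕ) :
    Fintype.card n.Partition = boundedCount (2 * n + 1) n n := by
  rw [← card_restricted_le_eq_boundedCount (by omega), restricted,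
    filter_true_of_mem fun p _ _ => le_of_mem_parts]
  rfl

end Nat.Partition

theorem partitionFun_values :
    partitionFun 6 = 11 ∧ partitionFun 17 = 297 ∧ partitionFun 28 = 3718 ∧
      partitionFun 39 = 31185 ∧ partitionFun 50 = 204226 := by
  simp only [partitionFun, Nat.Partition.card_eq_boundedCount]
  refine ⟨?_, ?_, ?_, ?_, ?_⟩ <;> exact Nat.cast_inj.2 (by decide +kernel)

theorem PowerSeries.coeff_ofNat_mul {R : Type*} [Semiring R] (n c : ℕ) [c.AtLeastTwo]
    (f : R⟦X⟧) : coeff n ((no_index (OfNat.ofNat c) : R⟦X⟧) * f) = OfNat.ofNat c * coeff n f := by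
  rw [← map_ofNat C c, coeff_C_mul]

theorem HahnSeries.coeff_single_one_mul_ofPowerSeries {R : Type*} [Semiring R] (a k : ℤ)
    (f : R⟦X⟧) : (single a 1 * ofPowerSeries ℤ R f).coeff k =
      if k - a < 0 then 0 else PowerSeries.coeff (k - a).natAbs f := by
  nth_rewrite 1 [← sub_add_cancel k a]
  rw [coeff_single_mul_add, one_mul, PowerSeries.coeff_coe]

theorem HahnSeries.ofPowerSeries_inv {K : Type*} [Field K] {f : K⟦X⟧}
    (hf : constantCoeff f ≠ 0) : (ofPowerSeries ℤ K f)⁻¹ = ofPowerSeries ℤ K f⁻¹ :=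
  inv_eq_of_mul_eq_one_right (by rw [← map_mul, PowerSeries.mul_inv_cancel _ hf, map_one])

section

variable {R : Type*} [CommRing R]

theorem PowerSeries.mk_span_X_pow_eq_iff {k : ℕ} {f g : R⟦X⟧} :
    Ideal.Quotient.mk (.span {X ^ k}) f = Ideal.Quotient.mk _ g ↔ X ^ k ∣ f - g := by
  rw [← sub_eq_zero, ← map_sub, Ideal.Quotient.eq_zero_iff_dvd]

theorem PowerSeries.coeff_eq_of_mk_span_X_pow_eq {k m : ℕ} {f g : R⟦X⟧}
    (h : Ideal.Quotient.mk (.span {X ^ k}) f = Ideal.Quotient.mk _ g) (hm : m < k) :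
    coeff m f = coeff m g :=
  sub_eq_zero.1 (by rw [← map_sub]; exact X_pow_dvd_iff.1 (mk_span_X_pow_eq_iff.1 h) m hm)

theorem PowerSeries.constantCoeff_eq_one_of_mk_span_X_pow_eq_one {k : ℕ} {f : R⟦X⟧} (hk : 0 < k)
    (h : Ideal.Quotient.mk (.span {X ^ k}) f = 1) : constantCoeff f = 1 := by
  simpa using coeff_eq_of_mk_span_X_pow_eq (m := 0) (h.trans (map_one _).symm) hk

theorem PowerSeries.X_pow_dvd_one_sub_X_pow_pow_sub_one {m n : ℕ} (hmn : m ≤ n) (j : ℕ) :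
    (X : R⟦X⟧) ^ m ∣ (1 - X ^ n) ^ j - 1 := by
  have h := sub_dvd_pow_sub_pow (1 - X ^ n : R⟦X⟧) 1 j
  rw [one_pow, sub_sub_cancel_left, neg_dvd] at h
  exact (pow_dvd_pow X hmn).trans h

theorem prod_one_sub_pow_pow_twelve_of_pow_five_eq_zero {x : R} (hx : x ^ 5 = 0) :
    ∏ n ∈ Icc 1 4, (1 - x ^ n) ^ 12 = 1 - 12 * x + 54 * x ^ 2 - 88 * x ^ 3 - 99 * x ^ 4 := by
  rw [show Icc 1 4 = {1, 2, 3, 4} by rfl, prod_insert (by decide), prod_insert (by decide),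
    prod_insert (by decide), prod_singleton]
  have h : ∀ m, 5 ≤ m → x ^ m = 0 := fun m hm => pow_eq_zero_of_le hm hx
  ring_nf
  simp [h]

end

theorem mk_formalProd {F : ℕ → ℚ⟦X⟧} (hF : ∀ n, 1 ≤ n → X ^ n ∣ F n - 1) (N : ℕ) :
    Ideal.Quotient.mk (.span {X ^ (N + 1)}) (formalProd F) =
      ∏ n ∈ Icc 1 N, Ideal.Quotient.mk _ (F n) := by
  rw [← map_prod, mk_span_X_pow_eq_iff, X_pow_dvd_iff]
  intro m hm
  rw [map_sub, formalProd, coeff_mk, sub_eq_zero]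
  refine coeff_eq_of_mk_span_X_pow_eq (k := m + 1) ?_ (Nat.lt_succ_self m)
  have hIcc (b : ℕ) : Icc 1 b = Ioc 0 b := Icc_add_one_left_eq_Ioc 0 b
  rw [hIcc, hIcc, ← prod_Ioc_consecutive _ (Nat.zero_le m) (Nat.lt_succ_iff.1 hm), map_mul,
    map_prod _ _ (Ioc m N), prod_eq_one (s := Ioc m N), mul_one]
  intro n hn
  rw [← map_one (Ideal.Quotient.mk _), mk_span_X_pow_eq_iff]
  exact (pow_dvd_pow X (mem_Ioc.1 hn).1).trans (hF n (by simp at hn; omega))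

theorem mk_formalProd_eq_one {F : ℕ → ℚ⟦X⟧} {N : ℕ} (hF : ∀ n, 1 ≤ n → X ^ (n + N) ∣ F n - 1) :
    Ideal.Quotient.mk (.span {X ^ (N + 1)}) (formalProd F) = 1 := by
  rw [mk_formalProd (fun n hn => (pow_dvd_pow X (Nat.le_add_right n N)).trans (hF n hn))]
  refine prod_eq_one fun n hn => ?_
  rw [← map_one (Ideal.Quotient.mk _), mk_span_X_pow_eq_iff]
  exact (pow_dvd_pow X (by simp at hn; omega)).trans (hF n (mem_Icc.1 hn).1)

theorem mk_formalProd_one_sub_X_pow_pow_twelve :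
    Ideal.Quotient.mk (.span {X ^ 5}) (formalProd fun n => (1 - X ^ n) ^ 12) =
      Ideal.Quotient.mk _ (1 - 12 * X + 54 * X ^ 2 - 88 * X ^ 3 - 99 * X ^ 4) := by
  rw [mk_formalProd (fun n _ => X_pow_dvd_one_sub_X_pow_pow_sub_one le_rfl 12) 4]
  simp only [map_pow, map_sub, map_one, map_mul, map_ofNat]
  exact prod_one_sub_pow_pow_twelve_of_pow_five_eq_zero
    (by rw [← map_pow, Ideal.Quotient.mk_singleton_self])

theorem mk_formalProd_one_sub_X_pow_eleven_mul_pow (j : ℕ) :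
    Ideal.Quotient.mk (.span {X ^ 5}) (formalProd fun n => (1 - X ^ (11 * n)) ^ j) = 1 :=
  mk_formalProd_eq_one (N := 4) fun n hn => X_pow_dvd_one_sub_X_pow_pow_sub_one (by omega) j

theorem mk_inv_eq_one {K : Type*} [Field K] {k : ℕ} {f : K⟦X⟧} (hk : 0 < k)
    (h : Ideal.Quotient.mk (.span {X ^ k}) f = 1) : Ideal.Quotient.mk (.span {X ^ k}) f⁻¹ = 1 := by
  have hf := constantCoeff_eq_one_of_mk_span_X_pow_eq_one hk h
  calc Ideal.Quotient.mk _ f⁻¹ = Ideal.Quotient.mk _ (f * f⁻¹) := by rw [map_mul, h, one_mul]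
    _ = 1 := by rw [PowerSeries.mul_inv_cancel _ (by simp [hf]), map_one]

theorem mk_etaQuotient_mul (g : ℚ⟦X⟧) :
    Ideal.Quotient.mk (.span {X ^ 5})
        ((formalProd fun n => (1 - X ^ n) ^ 12) * (formalProd fun n => (1 - X ^ (11 * n)) ^ 12)⁻¹ *
          (formalProd fun k => 1 - X ^ (11 * k)) * g) =
      Ideal.Quotient.mk _ ((1 - 12 * X + 54 * X ^ 2 - 88 * X ^ 3 - 99 * X ^ 4) * g) := by
  have hB := mk_inv_eq_one (by norm_num) (mk_formalProd_one_sub_X_pow_eleven_mul_pow 12)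
  have hC := mk_formalProd_one_sub_X_pow_eleven_mul_pow 1
  simp only [pow_one] at hC
  rw [map_mul, map_mul, map_mul, map_mul, mk_formalProd_one_sub_X_pow_pow_twelve, hB, hC,
    mul_one, mul_one]

theorem hSeries_eq :
    hSeries = HahnSeries.single (-4) 1 * HahnSeries.ofPowerSeries ℤ ℚ
      ((formalProd fun n => (1 - X ^ n) ^ 12) * (formalProd fun n => (1 - X ^ (11 * n)) ^ 12)⁻¹ *
        (formalProd fun k => 1 - X ^ (11 * k)) *
          PowerSeries.mk fun n => partitionFun (11 * n + 6)) := by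
  have hB : constantCoeff (formalProd fun n => (1 - X ^ (11 * n)) ^ 12) ≠ 0 := by
    simp [constantCoeff_eq_one_of_mk_span_X_pow_eq_one (by norm_num)
      (mk_formalProd_one_sub_X_pow_eleven_mul_pow 12)]
  rw [hSeries, tSeries, HahnSeries.ofPowerSeries_inv hB, map_mul, map_mul, map_mul,
    show HahnSeries.single (-4 : ℤ) (1 : ℚ) = .single 1 1 * .single (-5) 1 by
      rw [HahnSeries.single_mul_single]; norm_num]
  simp only [mul_assoc]

theorem coeff_hSeries_of_lt_one {k : ℤ} (hk : k < 1) :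
    hSeries.coeff k = if k + 4 < 0 then 0 else
      coeff (k + 4).natAbs ((1 - 12 * X + 54 * X ^ 2 - 88 * X ^ 3 - 99 * X ^ 4) *
        PowerSeries.mk fun n => partitionFun (11 * n + 6)) := by
  rw [hSeries_eq, HahnSeries.coeff_single_one_mul_ofPowerSeries, sub_neg_eq_add]
  split_ifs
  · rfl
  · exact coeff_eq_of_mk_span_X_pow_eq (mk_etaQuotient_mul _) (by omega)

/-- `h = 11q^{-4} + 165q^{-3} + 748q^{-2} + 1639q^{-1} + 3553 + O(q)`. -/
theorem hSeries_expansion :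
    hSeries.coeff (-4) = 11 ∧ hSeries.coeff (-3) = 165 ∧ hSeries.coeff (-2) = 748 ∧
      hSeries.coeff (-1) = 1639 ∧ hSeries.coeff 0 = 3553 ∧
      ∀ k : ℤ, k < -4 → hSeries.coeff k = 0 := by
  obtain ⟨p6, p17, p28, p39, p50⟩ := partitionFun_values
  refine ⟨?_, ?_, ?_, ?_, ?_, fun k hk => by
    rw [coeff_hSeries_of_lt_one (by omega), if_pos (by omega)]⟩ <;>
  rw [coeff_hSeries_of_lt_one (by norm_num)] <;>
  norm_num [sub_mul, add_mul, mul_assoc, coeff_X_pow_mul', coeff_ofNat_mul, p6, p17, p28, p39, p50]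

end
end

section
/- Let K be an algebraic function field over ℂ(x), let O_K be the integral closure of ℂ[x] in K, and let O_∞ be the integral closure in K of the ring R_∞ of rational functions with no pole at x = ∞. If β ∈ O_K is nonzero and β = c₁b₁ + ⋯ + c_nb_n with c_j ∈ ℂ[x], where b₁,…,b_n is a basis of O_K with associated integers d₁,…,d_n such that d_i is minimal with b_i ∈ x^{d_i}O_∞ and the leading vectors V₁,…,V_n (as in Trager's normalization) are linearly independent, then the minimal integer d with β ∈ x^d O_∞ equals max{deg(c_j) + d_j : c_j ≠ 0}. -/
/-!
Write `O = O_∞`. Reversing a polynomial gives `x ^ (-deg p) p(x) = (rev p)(x⁻¹)`, an element of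
`O` congruent to `lc p` modulo `x⁻¹ O`. Hence every term `c_j b_j` lies in
`x ^ (deg c_j + d_j) O ⊆ x ^ D O`, and modulo `x⁻¹ O` the element `x ^ (-D) β` is congruent to
`∑ lc(c_j) x ^ (-d_j) b_j`, the sum over the `j` with `deg c_j + d_j = D`. By the independence of
the residues of the `x ^ (-d_j) b_j` this is not `0` modulo `x⁻¹ O`, so `β ∉ x ^ (D - 1) O`.
-/

noncomputable section
open scoped Classical
open Polynomial

variable (K : Type*) [Field K] [Algebra (RatFunc ℂ) K] [Algebra (Polynomial ℂ) K]
  [IsScalarTower (Polynomial ℂ) (RatFunc ℂ) K] [Algebra ℂ K]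
  [IsScalarTower ℂ (RatFunc ℂ) K] [FiniteDimensional (RatFunc ℂ) K]

/-- The ring `R_∞` of rational functions with no pole at `x = ∞`, i.e. the valuation
subring of the valuation at infinity on `ℂ(x)`. -/
def Rinf : Subring (RatFunc ℂ) := ((FunctionField.inftyValuation ℂ).valuationSubring).toSubring

instance : Algebra (Rinf) K :=
  ((algebraMap (RatFunc ℂ) K).comp (SubringClass.subtype Rinf)).toAlgebra

/-- `O_K`: the integral closure of `ℂ[x]` in `K`. -/
def OK : Subalgebra (Polynomial ℂ) K := integralClosure (Polynomial ℂ) K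

/-- `O_∞`: the integral closure of `R_∞` in `K`. -/
def Oinf : Subalgebra (Rinf) K := integralClosure (Rinf) K

/-- The element `x ∈ K`, the image of the variable of `ℂ(x)`. -/
def xK : K := algebraMap (RatFunc ℂ) K RatFunc.X

/-- `β ∈ x^e O_∞`. -/
def memXpowOinf (e : ℤ) (β : K) : Prop := ∃ γ ∈ Oinf K, β = xK K ^ e * γ

theorem Polynomial.aeval_eq_pow_natDegree_mul_aeval_inv_reverse {k L : Type*} [CommSemiring k]
    [Field L] [Algebra k L] {x : L} (hx : x ≠ 0) (p : k[X]) :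
    aeval x p = x ^ p.natDegree * aeval x⁻¹ p.reverse := by
  let := invertibleOfNonzero hx
  rw [aeval_def, aeval_def, ← eval₂_reverse_mul_pow, invOf_eq_inv, mul_comm]

namespace Subring

variable {L : Type*} [Field L] (O : Subring L) (x : L)

/-- `x ^ e O`, as an additive subgroup of `L`. -/
def zpowSMul (e : ℤ) : AddSubgroup L :=
  O.toAddSubgroup.comap (AddMonoidHom.mulLeft (x ^ (-e)))

variable {O x}

theorem mem_zpowSMul {e : ℤ} {β : L} : β ∈ O.zpowSMul x e ↔ x ^ (-e) * β ∈ O := Iff.rfl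

theorem mem_zpowSMul_iff_exists (hx : x ≠ 0) {e : ℤ} {β : L} :
    β ∈ O.zpowSMul x e ↔ ∃ γ ∈ O, β = x ^ e * γ := by
  rw [mem_zpowSMul]
  constructor
  · refine fun h ↦ ⟨_, h, ?_⟩
    rw [← mul_assoc, ← zpow_add₀ hx, add_neg_cancel, zpow_zero, one_mul]
  · rintro ⟨γ, hγ, rfl⟩
    rwa [← mul_assoc, ← zpow_add₀ hx, neg_add_cancel, zpow_zero, one_mul]

theorem mul_mem_zpowSMul (hx : x ≠ 0) {e f : ℤ} {a b : L} (ha : a ∈ O.zpowSMul x e)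
    (hb : b ∈ O.zpowSMul x f) : a * b ∈ O.zpowSMul x (e + f) := by
  rw [mem_zpowSMul, neg_add, zpow_add₀ hx, mul_mul_mul_comm]
  exact mul_mem ha hb

theorem zpow_mem_zpowSMul (hx : x ≠ 0) (e : ℤ) : x ^ e ∈ O.zpowSMul x e := by
  rw [mem_zpowSMul, ← zpow_add₀ hx, neg_add_cancel, zpow_zero]
  exact one_mem O

theorem zpow_mem_of_nonpos (hxinv : x⁻¹ ∈ O) {e : ℤ} (he : e ≤ 0) : x ^ e ∈ O := by
  obtain ⟨m, hm⟩ := Int.eq_ofNat_of_zero_le (neg_nonneg.mpr he)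
  rw [← neg_neg e, hm, zpow_neg, zpow_natCast, ← inv_pow]
  exact pow_mem hxinv m

theorem zpowSMul_mono (hx : x ≠ 0) (hxinv : x⁻¹ ∈ O) : Monotone (O.zpowSMul x) := by
  intro e f hef β hβ
  rw [mem_zpowSMul, show -f = (e - f) + -e by ring, zpow_add₀ hx, mul_assoc]
  exact mul_mem (zpow_mem_of_nonpos hxinv (by omega)) hβ

section Polynomial

variable {k : Type*} [CommRing k] [Algebra k L]

theorem aeval_mem (hk : ∀ a, algebraMap k L a ∈ O) {y : L} (hy : y ∈ O) (p : k[X]) :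
    aeval y p ∈ O := by
  induction p using Polynomial.induction_on' with
  | add p q hp hq => rw [map_add]; exact add_mem hp hq
  | monomial n a => rw [aeval_monomial]; exact mul_mem (hk a) (pow_mem hy n)

theorem aeval_mem_zpowSMul (hk : ∀ a, algebraMap k L a ∈ O) (hx : x ≠ 0)
    (hxinv : x⁻¹ ∈ O) (p : k[X]) : aeval x p ∈ O.zpowSMul x p.natDegree := by
  rw [mem_zpowSMul, aeval_eq_pow_natDegree_mul_aeval_inv_reverse hx, zpow_neg, zpow_natCast,
    inv_mul_cancel_left₀ (pow_ne_zero _ hx)]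
  exact aeval_mem hk hxinv _

theorem zpow_neg_natDegree_mul_aeval_sub_leadingCoeff_mem (hk : ∀ a, algebraMap k L a ∈ O)
    (hx : x ≠ 0) (hxinv : x⁻¹ ∈ O) (p : k[X]) :
    x ^ (-(p.natDegree : ℤ)) * aeval x p - algebraMap k L p.leadingCoeff ∈
      O.zpowSMul x (-1) := by
  have h : x ^ (-(p.natDegree : ℤ)) * aeval x p - algebraMap k L p.leadingCoeff =
      x⁻¹ * aeval x⁻¹ p.reverse.divX := by
    rw [aeval_eq_pow_natDegree_mul_aeval_inv_reverse hx, zpow_neg, zpow_natCast,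
      inv_mul_cancel_left₀ (pow_ne_zero _ hx), ← coeff_zero_reverse]
    conv_lhs => rw [← divX_mul_X_add p.reverse]
    simp [mul_comm]
  rw [h, mem_zpowSMul, neg_neg, zpow_one, mul_inv_cancel_left₀ hx]
  exact aeval_mem hk hxinv _

theorem aeval_mul_mem_zpowSMul (hk : ∀ a, algebraMap k L a ∈ O) (hx : x ≠ 0)
    (hxinv : x⁻¹ ∈ O) {p : k[X]} {b : L} {d D : ℤ} (hb : b ∈ O.zpowSMul x d)
    (hD : p ≠ 0 → p.natDegree + d ≤ D) :
    aeval x p * b ∈ O.zpowSMul x D := by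
  rcases eq_or_ne p 0 with rfl | hp
  · simp
  · exact zpowSMul_mono hx hxinv (hD hp)
      (mul_mem_zpowSMul hx (aeval_mem_zpowSMul hk hx hxinv p) hb)

theorem zpow_mul_aeval_mul_sub_leadingCoeff_smul_mem (hk : ∀ a, algebraMap k L a ∈ O)
    (hx : x ≠ 0) (hxinv : x⁻¹ ∈ O) (p : k[X]) {b : L} {d : ℤ} (hb : b ∈ O.zpowSMul x d) :
    x ^ (-(p.natDegree + d)) * (aeval x p * b) - p.leadingCoeff • (x ^ (-d) * b) ∈
      O.zpowSMul x (-1) := by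
  have h : x ^ (-(p.natDegree + d)) * (aeval x p * b) - p.leadingCoeff • (x ^ (-d) * b) =
      (x ^ (-(p.natDegree : ℤ)) * aeval x p - algebraMap k L p.leadingCoeff) *
        (x ^ (-d) * b) := by
    rw [Algebra.smul_def, neg_add, zpow_add₀ hx]
    ring
  rw [h, ← add_zero (-1 : ℤ)]
  exact mul_mem_zpowSMul hx (zpow_neg_natDegree_mul_aeval_sub_leadingCoeff_mem hk hx hxinv p)
    (by simpa [mem_zpowSMul] using hb)

variable {ι : Type*} [Fintype ι]

theorem le_of_sum_aeval_mul_mem_zpowSMul (hk : ∀ a, algebraMap k L a ∈ O) (hx : x ≠ 0)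
    (hxinv : x⁻¹ ∈ O) {b : ι → L} {d : ι → ℤ} (hb : ∀ i, b i ∈ O.zpowSMul x (d i))
    (hindep : ∀ a : ι → k, ∑ i, a i • (x ^ (-d i) * b i) ∈ O.zpowSMul x (-1) → a = 0)
    {c : ι → k[X]} {D : ℤ} (hub : ∀ j, c j ≠ 0 → (c j).natDegree + d j ≤ D)
    (hex : ∃ j, c j ≠ 0 ∧ (c j).natDegree + d j = D) {e : ℤ}
    (he : ∑ i, aeval x (c i) * b i ∈ O.zpowSMul x e) : D ≤ e := by
  by_contra! he_lt
  -- `a j` is the residue of `x ^ (-D) * (c j b j)` modulo `x⁻¹ O` in the basis `x ^ (-d j) b j`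
  set a : ι → k := fun j ↦ if (c j).natDegree + d j = D then (c j).leadingCoeff else 0
  have hres : ∀ j, x ^ (-D) * (aeval x (c j) * b j) - a j • (x ^ (-d j) * b j) ∈
      O.zpowSMul x (-1) := by
    intro j
    by_cases hj : (c j).natDegree + d j = D
    · simpa only [a, if_pos hj, hj] using
        zpow_mul_aeval_mul_sub_leadingCoeff_smul_mem hk hx hxinv (c j) (hb j)
    · have h := mul_mem_zpowSMul hx (zpow_mem_zpowSMul hx (-D))
        (aeval_mul_mem_zpowSMul hk hx hxinv (hb j) (D := D - 1) fun hc ↦ by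
          have := hub j hc; omega)
      rw [show -D + (D - 1) = -1 by ring] at h
      simpa [a, if_neg hj] using h
  have hsum : ∑ j, a j • (x ^ (-d j) * b j) ∈ O.zpowSMul x (-1) := by
    have h : ∑ j, a j • (x ^ (-d j) * b j) = x ^ (-D) * ∑ i, aeval x (c i) * b i -
        ∑ j, (x ^ (-D) * (aeval x (c j) * b j) - a j • (x ^ (-d j) * b j)) := by
      rw [Finset.mul_sum, ← Finset.sum_sub_distrib]
      simp
    rw [h]
    exact sub_mem (zpowSMul_mono hx hxinv (by omega)
      (mul_mem_zpowSMul hx (zpow_mem_zpowSMul hx (-D)) he)) (sum_mem fun j _ ↦ hres j)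
  obtain ⟨j, hj0, hjD⟩ := hex
  exact hj0 (leadingCoeff_eq_zero.mp (by simpa [a, hjD] using congrFun (hindep a hsum) j))

theorem isLeast_zpowSMul_sum_aeval_mul (hk : ∀ a, algebraMap k L a ∈ O) (hx : x ≠ 0)
    (hxinv : x⁻¹ ∈ O) {b : ι → L} {d : ι → ℤ} (hb : ∀ i, b i ∈ O.zpowSMul x (d i))
    (hindep : ∀ a : ι → k, ∑ i, a i • (x ^ (-d i) * b i) ∈ O.zpowSMul x (-1) → a = 0)
    {c : ι → k[X]} {D : ℤ} (hub : ∀ j, c j ≠ 0 → (c j).natDegree + d j ≤ D)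
    (hex : ∃ j, c j ≠ 0 ∧ (c j).natDegree + d j = D) :
    IsLeast {e | ∑ i, aeval x (c i) * b i ∈ O.zpowSMul x e} D :=
  ⟨sum_mem fun j _ ↦ aeval_mul_mem_zpowSMul hk hx hxinv (hb j) (hub j),
    fun _ he ↦ le_of_sum_aeval_mul_mem_zpowSMul hk hx hxinv hb hindep hub hex he⟩

end Polynomial

end Subring

section FunctionField

variable {F : Type*} [Field F] [Algebra (RatFunc ℂ) F]

theorem C_mem_Rinf (a : ℂ) : RatFunc.C a ∈ Rinf := by
  change _ ∈ (RatFunc.inftyValuation ℂ).valuationSubring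
  rw [Valuation.mem_valuationSubring_iff]
  rcases eq_or_ne a 0 with rfl | ha
  · simp
  · rw [RatFunc.inftyValuation.C ℂ ha]

theorem inv_X_mem_Rinf : RatFunc.X⁻¹ ∈ Rinf := by
  change _ ∈ (RatFunc.inftyValuation ℂ).valuationSubring
  rw [Valuation.mem_valuationSubring_iff, inv_eq_one_div, RatFunc.inftyValuation.X_inv]
  decide

theorem algebraMap_mem_Oinf {f : RatFunc ℂ} (hf : f ∈ Rinf) :
    algebraMap (RatFunc ℂ) F f ∈ Oinf F :=
  isIntegral_algebraMap (x := (⟨f, hf⟩ : Rinf))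

theorem xK_ne_zero : xK F ≠ 0 :=
  (_root_.map_ne_zero _).mpr RatFunc.X_ne_zero

theorem inv_xK_mem_Oinf : (xK F)⁻¹ ∈ Oinf F := by
  rw [xK, ← map_inv₀]
  exact algebraMap_mem_Oinf inv_X_mem_Rinf

theorem memXpowOinf_iff {e : ℤ} {β : F} :
    memXpowOinf F e β ↔ β ∈ (Oinf F).toSubring.zpowSMul (xK F) e := by
  rw [Subring.mem_zpowSMul_iff_exists xK_ne_zero]
  rfl

variable [Algebra ℂ F] [IsScalarTower ℂ (RatFunc ℂ) F]

theorem algebraMap_complex_mem_Oinf (a : ℂ) : algebraMap ℂ F a ∈ Oinf F := by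
  rw [IsScalarTower.algebraMap_apply ℂ (RatFunc ℂ) F, RatFunc.algebraMap_eq_C]
  exact algebraMap_mem_Oinf (C_mem_Rinf a)

theorem algebraMap_polynomial_eq_aeval_xK [Algebra ℂ[X] F] [IsScalarTower ℂ[X] (RatFunc ℂ) F]
    (p : ℂ[X]) : algebraMap ℂ[X] F p = aeval (xK F) p := by
  rw [IsScalarTower.algebraMap_apply ℂ[X] (RatFunc ℂ) F, xK, aeval_algebraMap_apply,
    ← RatFunc.algebraMap_X, aeval_algebraMap_apply, aeval_X_left_apply]

end FunctionField

theorem normalized_basis_min_exponent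
    (n : ℕ) (b : Fin n → K)
    (d : Fin n → ℤ)
    (hmemd : ∀ i, memXpowOinf K (d i) (b i))
    (hindep : ∀ c : Fin n → ℂ,
      (∃ γ ∈ Oinf K, (∑ i, c i • (xK K ^ (-(d i)) * b i)) = (xK K)⁻¹ * γ) → c = 0)
    (β : K)
    (c : Fin n → Polynomial ℂ)
    (hβ : β = ∑ i, algebraMap (Polynomial ℂ) K (c i) * b i)
    (D : ℤ)
    (hub : ∀ j, c j ≠ 0 → ((c j).natDegree : ℤ) + d j ≤ D)
    (hex : ∃ j, c j ≠ 0 ∧ ((c j).natDegree : ℤ) + d j = D) :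
    IsLeast {e : ℤ | memXpowOinf K e β} D := by
  have hindep' : ∀ a : Fin n → ℂ, ∑ i, a i • (xK K ^ (-d i) * b i) ∈
      (Oinf K).toSubring.zpowSMul (xK K) (-1) → a = 0 := fun a ha ↦ by
    rw [Subring.mem_zpowSMul_iff_exists xK_ne_zero, zpow_neg_one] at ha
    exact hindep a ha
  simpa only [memXpowOinf_iff, hβ, algebraMap_polynomial_eq_aeval_xK] using
    Subring.isLeast_zpowSMul_sum_aeval_mul algebraMap_complex_mem_Oinf xK_ne_zero inv_xK_mem_Oinf
      (fun i ↦ memXpowOinf_iff.mp (hmemd i)) hindep' hub hex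

end
end
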